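/- Let T : ℂ² → ℂ² be a linear contraction with respect to ⟨·,·⟩_K and let a ∈ Ω be nonneutral. Then for every n and all points λ₁,…,λ_n ∈ 𝔻 with ⟨Φ(λ_i),a⟩_K ≠ 1 for each i, the n×n matrix with (i,j)-entry (1 − ⟨T·φ_a(Φ(λ_i)), T·φ_a(Φ(λ_j))⟩_K)/(1 − ⟨Φ(λ_i),Φ(λ_j)⟩_K) is positive semi-definite. -/

import Mathlib

/-!
The kernel splits as `(1 - ⟨a,a⟩_K) c cᴴ + D ⊙ S ⊙ S` with `c i = (1 - ⟨Φ(λᵢ),a⟩_K)⁻¹`,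
`D` the defect Gram matrix `⟨gᵢ,gⱼ⟩_K - ⟨Tgᵢ,Tgⱼ⟩_K` of the points `gᵢ = φ_a(Φ(λᵢ))`, and `S` the
Szegő kernel `(1 - λᵢ conj λⱼ)⁻¹`. This comes from the identity
`1 - ⟨φ_a z, φ_a w⟩_K = (1 - ⟨a,a⟩_K)(1 - ⟨z,w⟩_K) / ((1 - ⟨z,a⟩_K)(1 - ⟨a,w⟩_K))`
together with `1 - ⟨Φ(z),Φ(λ)⟩_K = (1 - conj λ z)²`. The first summand is a nonnegative multiple
of a rank-one matrix, `D` is positive semidefinite because `T` is a contraction, `S` is the sum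
of the geometric series of rank-one matrices `(λᵢᵏ conj λⱼᵏ)`, and the Schur product theorem
finishes the argument.
-/

open Complex ComplexConjugate ComplexOrder

/-- The indefinite inner product `⟨z,w⟩_K = z₁·conj(w₁) − z₂·conj(w₂)` on ℂ². -/
noncomputable def Kip (z w : Fin 2 → ℂ) : ℂ :=
  z 0 * conj (w 0) - z 1 * conj (w 1)

/-- The unit ball `Ω = {z : |z₁|² − |z₂|² < 1}` of the Kreĭn space `(ℂ², ⟨·,·⟩_K)`. -/
def Omega : Set (Fin 2 → ℂ) :=
  {z | ‖z 0‖ ^ 2 - ‖z 1‖ ^ 2 < 1}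

/-- The birational involution `φ_a(z) = (a − P_a z − s_a Q_a z)/(1 − ⟨z,a⟩_K)`,
with the convention `φ_0(z) = −z`.  Here `P_a z = (⟨z,a⟩_K/⟨a,a⟩_K)a`,
`Q_a = I − P_a` and `s_a = (1 − ⟨a,a⟩_K)^{1/2}` (note `⟨a,a⟩_K` is real). -/
noncomputable def phiK (a z : Fin 2 → ℂ) : Fin 2 → ℂ :=
  if a = 0 then -z
  else
    (1 - Kip z a)⁻¹ •
      (a - (Kip z a / Kip a a) • a
        - (Real.sqrt (1 - (Kip a a).re) : ℂ) • (z - (Kip z a / Kip a a) • a))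

/-- The nonlinear embedding `Φ(λ) = (√2·λ, λ²)`. -/
noncomputable def PhiMap (l : ℂ) : Fin 2 → ℂ := ![(Real.sqrt 2 : ℂ) * l, l ^ 2]

open Matrix

section Kip

variable (z w u : Fin 2 → ℂ) (c : ℂ)

theorem conj_kip : conj (Kip z w) = Kip w z := by
  simp only [Kip, map_sub, map_mul, conj_conj]; ring

theorem ofReal_re_kip_self : ((Kip z z).re : ℂ) = Kip z z :=
  conj_eq_iff_re.mp (conj_kip z z)

theorem kip_sub_left : Kip (z - w) u = Kip z u - Kip w u := by
  simp only [Kip, Pi.sub_apply]; ring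

theorem kip_smul_left : Kip (c • z) w = c * Kip z w := by
  simp only [Kip, Pi.smul_apply, smul_eq_mul]; ring

theorem kip_sub_right : Kip u (z - w) = Kip u z - Kip u w := by
  simp only [Kip, Pi.sub_apply, map_sub]; ring

theorem kip_smul_right : Kip z (c • w) = conj c * Kip z w := by
  simp only [Kip, Pi.smul_apply, smul_eq_mul, map_mul]; ring

end Kip

theorem kip_self_re_lt_one {a : Fin 2 → ℂ} (ha : a ∈ Omega) : (Kip a a).re < 1 := by
  have hK : Kip a a = ((‖a 0‖ ^ 2 - ‖a 1‖ ^ 2 : ℝ) : ℂ) := by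
    simp only [Kip, mul_conj, normSq_eq_norm_sq]; push_cast; ring
  rw [hK, ofReal_re]
  exact ha

theorem one_sub_kip_PhiMap (u v : ℂ) :
    1 - Kip (PhiMap u) (PhiMap v) = (1 - u * conj v) ^ 2 := by
  have h2 : (√2 : ℂ) ^ 2 = 2 := by rw [← ofReal_pow, Real.sq_sqrt zero_le_two, ofReal_ofNat]
  simp only [Kip, PhiMap, Matrix.cons_val_zero, Matrix.cons_val_one,
    map_mul, map_pow, conj_ofReal]
  linear_combination (-u * conj v) * h2

theorem one_sub_kip_phiK_phiK {a : Fin 2 → ℂ} (ha : Kip a a ≠ 0) (ha1 : (Kip a a).re ≤ 1)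
    {z w : Fin 2 → ℂ} (hz : Kip z a ≠ 1) (hw : Kip w a ≠ 1) :
    1 - Kip (phiK a z) (phiK a w) =
      (1 - Kip a a) * ((1 - Kip z a)⁻¹ * conj (1 - Kip w a)⁻¹) * (1 - Kip z w) := by
  have ha0 : a ≠ 0 := by rintro rfl; simp [Kip] at ha
  have hs : (√(1 - (Kip a a).re) : ℂ) ^ 2 = 1 - Kip a a := by
    rw [← ofReal_pow, Real.sq_sqrt (by linarith), ofReal_sub, ofReal_one, ofReal_re_kip_self]
  have hz' : 1 - Kip z a ≠ 0 := sub_ne_zero.2 (Ne.symm hz)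
  have hw' : 1 - Kip a w ≠ 0 := by
    rw [← conj_kip, ← map_one (starRingEnd ℂ), ← map_sub, map_ne_zero]
    exact sub_ne_zero.2 (Ne.symm hw)
  simp only [phiK, if_neg ha0, kip_smul_left, kip_smul_right, kip_sub_left, kip_sub_right,
    map_inv₀, map_sub, map_one, map_div₀, conj_ofReal, conj_kip]
  field_simp
  linear_combination (Kip a w * Kip z a - Kip a a * Kip z w) * hs

section

variable {ι : Type*}

theorem kip_sum_smul_sum_smul (s : Finset ι) (c d : ι → ℂ) (g h : ι → Fin 2 → ℂ) :
    Kip (∑ i ∈ s, c i • g i) (∑ j ∈ s, d j • h j) =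
      ∑ i ∈ s, ∑ j ∈ s, c i * conj (d j) * Kip (g i) (h j) := by
  simp only [Kip, Finset.sum_apply, Pi.smul_apply, smul_eq_mul, map_sum, map_mul,
    Finset.sum_mul_sum, ← Finset.sum_sub_distrib]
  exact Finset.sum_congr rfl fun i _ => Finset.sum_congr rfl fun j _ => by ring

noncomputable def kipGram (g : ι → Fin 2 → ℂ) : Matrix ι ι ℂ :=
  of fun i j => Kip (g i) (g j)

theorem star_dotProduct_kipGram_mulVec [Fintype ι] (g : ι → Fin 2 → ℂ) (v : ι → ℂ) :
    star v ⬝ᵥ (kipGram g *ᵥ v) = Kip (∑ i, star (v i) • g i) (∑ i, star (v i) • g i) := by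
  simp only [kip_sum_smul_sum_smul, dotProduct, mulVec, kipGram, of_apply, Finset.mul_sum,
    Pi.star_apply, RCLike.star_def, conj_conj]
  exact Finset.sum_congr rfl fun i _ => Finset.sum_congr rfl fun j _ => by ring

theorem isHermitian_kipGram (g : ι → Fin 2 → ℂ) : (kipGram g).IsHermitian :=
  IsHermitian.ext fun i j => by simp [kipGram, conj_kip]

theorem posSemidef_kipGram_sub_kipGram_comp [Fintype ι]
    (T : (Fin 2 → ℂ) →ₗ[ℂ] (Fin 2 → ℂ)) (hT : ∀ z, (Kip (T z) (T z)).re ≤ (Kip z z).re)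
    (g : ι → Fin 2 → ℂ) : (kipGram g - kipGram (T ∘ g)).PosSemidef := by
  refine .of_dotProduct_mulVec_nonneg ((isHermitian_kipGram g).sub (isHermitian_kipGram _))
    fun v => ?_
  set h := ∑ i, star (v i) • g i
  have hTh : ∑ i, star (v i) • (T ∘ g) i = T h := by simp [h, map_sum]
  rw [sub_mulVec, dotProduct_sub, star_dotProduct_kipGram_mulVec, star_dotProduct_kipGram_mulVec,
    hTh, ← ofReal_re_kip_self h, ← ofReal_re_kip_self (T h), ← ofReal_sub, zero_le_real, sub_nonneg]
  exact hT h

variable {𝕜 : Type*} [RCLike 𝕜]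

theorem Matrix.posSemidef_of_hasSum {β : Type*} [Fintype ι]
    {A : β → Matrix ι ι 𝕜} {M : Matrix ι ι 𝕜} (hA : ∀ k, (A k).PosSemidef) (hM : HasSum A M) :
    M.PosSemidef := by
  refine .of_dotProduct_mulVec_nonneg ?_ fun x => ?_
  · exact hM.matrix_conjTranspose.unique (by simpa only [(hA _).isHermitian.eq] using hM)
  · let q : Matrix ι ι 𝕜 →+ 𝕜 :=
      AddMonoidHom.mk' (fun M => star x ⬝ᵥ (M *ᵥ x)) fun M N => by
        simp only [add_mulVec, dotProduct_add]
    have hq : Continuous q := by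
      show Continuous fun M : Matrix ι ι 𝕜 => star x ⬝ᵥ (M *ᵥ x)
      fun_prop
    change 0 ≤ q M
    rw [← (hM.map q hq).tsum_eq]
    exact tsum_nonneg fun k => (hA k).dotProduct_mulVec_nonneg x

noncomputable def szegoKernel (x : ι → 𝕜) : Matrix ι ι 𝕜 :=
  of fun i j => (1 - x i * star (x j))⁻¹

theorem norm_mul_star_lt_one {z w : 𝕜} (hz : ‖z‖ < 1) (hw : ‖w‖ < 1) :
    ‖z * star w‖ < 1 := by
  rw [norm_mul, norm_star]
  exact mul_lt_one_of_nonneg_of_lt_one_left (norm_nonneg z) hz hw.le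

theorem posSemidef_szegoKernel [Fintype ι] {x : ι → 𝕜}
    (hx : ∀ i, ‖x i‖ < 1) : (szegoKernel x).PosSemidef := by
  have hterm : ∀ k, vecMulVec (x ^ k) (star (x ^ k)) = of fun i j => (x i * star (x j)) ^ k :=
    fun k => by ext i j; simp [vecMulVec_apply, mul_pow]
  have hsum : HasSum (fun k => vecMulVec (x ^ k) (star (x ^ k))) (szegoKernel x) := by
    simp only [hterm]
    exact Pi.hasSum.2 fun i => Pi.hasSum.2 fun j =>
      hasSum_geometric_of_norm_lt_one (norm_mul_star_lt_one (hx i) (hx j))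
  exact posSemidef_of_hasSum (fun k => posSemidef_vecMulVec_self_star _) hsum

end

/-- For any ⟨·,·⟩_K-contraction `T` and nonneutral `a ∈ Ω`, the map `T ∘ φ_a`
belongs to the class `𝓡𝓢_Φ(Ω)`: the associated kernel is positive semi-definite. -/
theorem contraction_comp_phiK_kernel_posSemidef
    (T : (Fin 2 → ℂ) →ₗ[ℂ] (Fin 2 → ℂ))
    (hT : ∀ z : Fin 2 → ℂ, (Kip (T z) (T z)).re ≤ (Kip z z).re)
    (a : Fin 2 → ℂ) (haO : a ∈ Omega) (ha : Kip a a ≠ 0)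
    (n : ℕ) (x : Fin n → ℂ)
    (hx : ∀ i, ‖x i‖ < 1 ∧ Kip (PhiMap (x i)) a ≠ 1) :
    (Matrix.of fun i j : Fin n =>
      (1 - Kip (T (phiK a (PhiMap (x i)))) (T (phiK a (PhiMap (x j))))) /
        (1 - Kip (PhiMap (x i)) (PhiMap (x j)))).PosSemidef := by
  set g := fun i => phiK a (PhiMap (x i))
  set c := fun i => (1 - Kip (PhiMap (x i)) a)⁻¹
  have hdecomp : (Matrix.of fun i j : Fin n =>
      (1 - Kip (T (g i)) (T (g j))) / (1 - Kip (PhiMap (x i)) (PhiMap (x j)))) =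
      (1 - Kip a a) • vecMulVec c (star c) +
        (kipGram g - kipGram (T ∘ g)) ⊙ (szegoKernel x ⊙ szegoKernel x) := by
    ext i j
    have hg : 1 - Kip (g i) (g j) = (1 - Kip a a) * (c i * conj (c j)) *
        (1 - Kip (PhiMap (x i)) (PhiMap (x j))) :=
      one_sub_kip_phiK_phiK ha (kip_self_re_lt_one haO).le (hx i).2 (hx j).2
    have hu : 1 - x i * conj (x j) ≠ 0 := sub_ne_zero.2 fun h =>
      (norm_mul_star_lt_one (hx i).1 (hx j).1).ne (by rw [RCLike.star_def, ← h, norm_one])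
    simp only [of_apply, Matrix.add_apply, Matrix.smul_apply, vecMulVec_apply, hadamard_apply,
      Matrix.sub_apply, kipGram, szegoKernel, Function.comp_apply, Pi.star_apply, RCLike.star_def,
      smul_eq_mul]
    rw [one_sub_kip_PhiMap] at hg ⊢
    field_simp
    linear_combination hg
  have hdefect : 0 ≤ 1 - Kip a a := by
    rw [← ofReal_re_kip_self, ← ofReal_one, ← ofReal_sub, zero_le_real, sub_nonneg]
    exact (kip_self_re_lt_one haO).le
  have hszego := posSemidef_szegoKernel fun i => (hx i).1
  rw [hdecomp]
  exact ((posSemidef_vecMulVec_self_star c).smul hdefect).add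
    ((posSemidef_kipGram_sub_kipGram_comp T hT g).hadamard (hszego.hadamard hszego))
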